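/- arXiv:2206.04269 — 8 statements merged into one kernel-verified Lean document; each statement's English description precedes it below -/
import Mathlib

section
/- (TWU downward closure property) For all nonempty itemsets X and X' with X ⊆ X', the transaction-weighted utility satisfies TWU(X') ≤ TWU(X). Consequently, for any threshold min_util, if TWU(X) < min_util then TWU(X') < min_util, i.e. no superset of an itemset whose TWU is below the utility threshold has TWU reaching the threshold. -/
open Finset

/-- The transaction-weighted utility of an itemset `X`: the sum, over all transactions `T`
in the database `D` containing `X` (i.e. `q x T ≥ 1` for all `x ∈ X`), of the transaction
utility `TU(T) = ∑ x, q x T * v x`. -/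
def TWU {ι τ : Type*} [Fintype ι] (D : Finset τ) (q : ι → τ → ℕ) (v : ι → ℕ)
    (X : Finset ι) : ℕ :=
  ∑ T ∈ D.filter (fun T => ∀ x ∈ X, 1 ≤ q x T), ∑ x, q x T * v x

/-- TWU downward closure property: for nonempty itemsets `X ⊆ X'`, `TWU(X') ≤ TWU(X)`;
consequently if `TWU(X) < min_util` then `TWU(X') < min_util`. -/
theorem twu_downward_closure {ι τ : Type*} [Fintype ι] (D : Finset τ)
    (q : ι → τ → ℕ) (v : ι → ℕ) (X X' : Finset ι)
    (hX : X.Nonempty) (hX' : X'.Nonempty) (hsub : X ⊆ X') :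
    TWU D q v X' ≤ TWU D q v X ∧
      ∀ min_util : ℕ, TWU D q v X < min_util → TWU D q v X' < min_util := by
  have h : TWU D q v X' ≤ TWU D q v X := by
    apply Finset.sum_le_sum_of_subset
    intro T hT
    simp only [Finset.mem_filter] at *
    exact ⟨hT.1, fun x hx => hT.2 x (hsub hx)⟩
  exact ⟨h, fun m hm => lt_of_le_of_lt h hm⟩
end

section
/- (Property 3: every high-utility itemset is a high transaction-weighted utility itemset) For every nonempty itemset X, U(X) ≤ TWU(X). Consequently, for any threshold min_util, if U(X) ≥ min_util (X is a high-utility itemset) then TWU(X) ≥ min_util (X is a high transaction-weighted utility itemset). -/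
open Finset

/-- The utility of an itemset `X`: the sum, over all transactions `T` in the database `D`
containing `X`, of `u(X,T) = (min_{x ∈ X} q x T) * (∑ x ∈ X, v x)`. -/
noncomputable def util {ι τ : Type*} (D : Finset τ) (q : ι → τ → ℕ) (v : ι → ℕ)
    (X : Finset ι) : ℕ :=
  ∑ T ∈ D.filter (fun T => ∀ x ∈ X, 1 ≤ q x T),
    sInf ((fun x => q x T) '' ↑X) * ∑ x ∈ X, v x

/-- Property 3: for every nonempty itemset `X`, `U(X) ≤ TWU(X)`; consequently every
high-utility itemset is a high transaction-weighted utility itemset. -/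
theorem hui_is_htwui {ι τ : Type*} [Fintype ι] (D : Finset τ)
    (q : ι → τ → ℕ) (v : ι → ℕ) (X : Finset ι) (hX : X.Nonempty) :
    util D q v X ≤ TWU D q v X ∧
      ∀ min_util : ℕ, min_util ≤ util D q v X → min_util ≤ TWU D q v X := by
  have h : util D q v X ≤ TWU D q v X := by
    unfold util TWU
    refine Finset.sum_le_sum fun T hT => ?_
    rw [Finset.mul_sum]
    calc ∑ x ∈ X, sInf ((fun x => q x T) '' ↑X) * v x
        ≤ ∑ x ∈ X, q x T * v x := by
          refine Finset.sum_le_sum fun x hx => ?_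
          exact Nat.mul_le_mul_right _ (Nat.sInf_le ⟨x, by simpa using hx, rfl⟩)
      _ ≤ ∑ x, q x T * v x := Finset.sum_le_sum_of_subset (Finset.subset_univ X)
  exact ⟨h, fun m hm => hm.trans h⟩
end

section
/- (Property 4: remaining utility downward closure) Let X be a nonempty itemset and let X' be an ordered extension of X (X ⊊ X' and every item of X' \ X is strictly greater, in the fixed linear order on items, than every item of X). Then U(X') ≤ U(X) + rutil(X). Consequently, for any threshold min_util, if U(X) + rutil(X) < min_util then U(X') < min_util, i.e. no ordered extension of X is a high-utility itemset. -/
open Finset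

/-- The remaining utility of `X` in a transaction `T`: the sum of `q x T * v x` over all
items `x` present in `T` (`q x T ≥ 1`) that are strictly greater than every item of `X`. -/
def rutilT {ι τ : Type*} [Fintype ι] [LinearOrder ι] (q : ι → τ → ℕ) (v : ι → ℕ)
    (X : Finset ι) (T : τ) : ℕ :=
  ∑ x ∈ Finset.univ.filter (fun x => 1 ≤ q x T ∧ ∀ y ∈ X, y < x), q x T * v x

/-- The remaining utility of `X`: the sum of `rutil(X,T)` over all transactions `T` in `D`
containing `X`. -/
def rutil {ι τ : Type*} [Fintype ι] [LinearOrder ι] (D : Finset τ)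
    (q : ι → τ → ℕ) (v : ι → ℕ) (X : Finset ι) : ℕ :=
  ∑ T ∈ D.filter (fun T => ∀ x ∈ X, 1 ≤ q x T), rutilT q v X T

/-- Property 4 (remaining utility downward closure): if `X'` is an ordered extension of a
nonempty itemset `X`, then `U(X') ≤ U(X) + rutil(X)`; consequently if
`U(X) + rutil(X) < min_util` then `U(X') < min_util`. -/
theorem remaining_utility_downward_closure {ι τ : Type*} [Fintype ι] [LinearOrder ι]
    (D : Finset τ) (q : ι → τ → ℕ) (v : ι → ℕ) (X X' : Finset ι)
    (hX : X.Nonempty) (hss : X ⊂ X')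
    (hord : ∀ y ∈ X' \ X, ∀ x ∈ X, x < y) :
    util D q v X' ≤ util D q v X + rutil D q v X ∧
      ∀ min_util : ℕ,
        util D q v X + rutil D q v X < min_util → util D q v X' < min_util := by
  have hsub : X ⊆ X' := hss.subset
  have hmain : util D q v X' ≤ util D q v X + rutil D q v X := by
    have hpt : ∀ T, (∀ x ∈ X', 1 ≤ q x T) →
        sInf ((fun x => q x T) '' ↑X') * ∑ x ∈ X', v x ≤
          sInf ((fun x => q x T) '' ↑X) * ∑ x ∈ X, v x + rutilT q v X T := by
      intro T hT
      set m' := sInf ((fun x => q x T) '' ↑X') with hm'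
      have hmle : m' ≤ sInf ((fun x => q x T) '' ↑X) := by
        have hne : ((fun x => q x T) '' ↑X).Nonempty := (hX.to_set).image _
        obtain ⟨a, ha, haeq⟩ := Nat.sInf_mem hne
        rw [← haeq]
        exact Nat.sInf_le ⟨a, hsub ha, rfl⟩
      have hsplit : ∑ x ∈ X', v x = ∑ x ∈ X, v x + ∑ x ∈ X' \ X, v x := by
        rw [add_comm, Finset.sum_sdiff hsub]
      rw [hsplit, Nat.mul_add]
      refine Nat.add_le_add (Nat.mul_le_mul_right _ hmle) ?_
      rw [Finset.mul_sum]
      calc ∑ x ∈ X' \ X, m' * v x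
          ≤ ∑ x ∈ X' \ X, q x T * v x := by
            refine Finset.sum_le_sum fun x hx => Nat.mul_le_mul_right _ ?_
            exact Nat.sInf_le ⟨x, (Finset.mem_sdiff.mp hx).1, rfl⟩
        _ ≤ rutilT q v X T := by
            refine Finset.sum_le_sum_of_subset fun x hx => ?_
            simp only [Finset.mem_filter, Finset.mem_univ, true_and]
            exact ⟨hT x (Finset.mem_sdiff.mp hx).1, fun y hy => hord x hx y hy⟩
    have e1 : util D q v X' = ∑ T ∈ D.filter (fun T => ∀ x ∈ X', 1 ≤ q x T),
        sInf ((fun x => q x T) '' ↑X') * ∑ x ∈ X', v x := by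
      unfold util
      exact Finset.sum_congr (Finset.filter_congr_decidable _ _ _) (fun _ _ => rfl)
    have e2 : util D q v X = ∑ T ∈ D.filter (fun T => ∀ x ∈ X, 1 ≤ q x T),
        sInf ((fun x => q x T) '' ↑X) * ∑ x ∈ X, v x := by
      unfold util
      exact Finset.sum_congr (Finset.filter_congr_decidable _ _ _) (fun _ _ => rfl)
    have e3 : rutil D q v X = ∑ T ∈ D.filter (fun T => ∀ x ∈ X, 1 ≤ q x T),
        rutilT q v X T := by
      unfold rutil
      exact Finset.sum_congr (Finset.filter_congr_decidable _ _ _) (fun _ _ => rfl)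
    rw [e1, e2, e3]
    refine le_trans (Finset.sum_le_sum fun T hT => hpt T (Finset.mem_filter.mp hT).2)
      (le_trans (Finset.sum_le_sum_of_subset fun T hT => ?_) (le_of_eq Finset.sum_add_distrib))
    simp only [Finset.mem_filter] at hT ⊢
    exact ⟨hT.1, fun x hx => hT.2 x (hsub hx)⟩
  exact ⟨hmain, fun m h => lt_of_le_of_lt hmain h⟩
end

section
/- (Per-transaction remaining utility bound) Let X be a nonempty itemset, let X' be an ordered extension of X (X ⊊ X' and every item of X' \ X is strictly greater, in the fixed linear order on items, than every item of X), and let T be a transaction with X' ⊆ T. Then u(X',T) ≤ u(X,T) + rutil(X,T). -/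
open Finset

/-- The utility of an itemset `X` in a transaction `T` containing `X`:
`u(X,T) = (min_{x ∈ X} q x T) * (∑ x ∈ X, v x)`. -/
noncomputable def uIn {ι τ : Type*} (q : ι → τ → ℕ) (v : ι → ℕ)
    (X : Finset ι) (T : τ) : ℕ :=
  sInf ((fun x => q x T) '' ↑X) * ∑ x ∈ X, v x

/-- Per-transaction remaining utility bound: if `X'` is an ordered extension of a nonempty
itemset `X` and `T` is a transaction of the database with `X' ⊆ T`, then
`u(X',T) ≤ u(X,T) + rutil(X,T)`. -/
theorem per_transaction_remaining_utility_bound {ι τ : Type*} [Fintype ι] [LinearOrder ι]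
    (D : Finset τ) (q : ι → τ → ℕ) (v : ι → ℕ) (X X' : Finset ι) (T : τ)
    (hX : X.Nonempty) (hss : X ⊂ X')
    (hord : ∀ y ∈ X' \ X, ∀ x ∈ X, x < y)
    (hT : T ∈ D) (hXT : ∀ x ∈ X', 1 ≤ q x T) :
    uIn q v X' T ≤ uIn q v X T + rutilT q v X T := by
  have hsub : X ⊆ X' := hss.subset
  set m' := sInf ((fun x => q x T) '' ↑X') with hm'
  set m := sInf ((fun x => q x T) '' ↑X) with hm
  -- m' ≤ q y T for all y ∈ X'
  have hle : ∀ y ∈ X', m' ≤ q y T := fun y hy =>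
    Nat.sInf_le ⟨y, by simpa using hy, rfl⟩
  -- m' ≤ m
  have hmem : m ∈ (fun x => q x T) '' ↑X := by
    apply Nat.sInf_mem
    obtain ⟨x, hx⟩ := hX
    exact ⟨q x T, x, by simpa using hx, rfl⟩
  obtain ⟨x0, hx0, hx0eq⟩ := hmem
  have hx0X : x0 ∈ X := by simpa using hx0
  have hm'm : m' ≤ m := hx0eq ▸ hle x0 (hsub hx0X)
  -- split the sum
  have hsplit : ∑ x ∈ X', v x = ∑ x ∈ X, v x + ∑ x ∈ X' \ X, v x := by
    rw [add_comm, Finset.sum_sdiff hsub]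
  unfold uIn rutilT
  rw [hsplit, Nat.mul_add]
  have h1 : m' * ∑ x ∈ X, v x ≤ m * ∑ x ∈ X, v x :=
    Nat.mul_le_mul_right _ hm'm
  have h2 : m' * ∑ x ∈ X' \ X, v x ≤
      ∑ x ∈ Finset.univ.filter (fun x => 1 ≤ q x T ∧ ∀ y ∈ X, y < x), q x T * v x := by
    rw [Finset.mul_sum]
    calc ∑ x ∈ X' \ X, m' * v x
        ≤ ∑ x ∈ X' \ X, q x T * v x :=
          Finset.sum_le_sum fun x hx =>
            Nat.mul_le_mul_right _ (hle x (Finset.mem_sdiff.mp hx).1)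
      _ ≤ ∑ x ∈ Finset.univ.filter (fun x => 1 ≤ q x T ∧ ∀ y ∈ X, y < x), q x T * v x :=
          Finset.sum_le_sum_of_subset fun x hx =>
            Finset.mem_filter.mpr ⟨Finset.mem_univ _,
              hXT x (Finset.mem_sdiff.mp hx).1, fun y hy => hord x hx y hy⟩
  exact Nat.add_le_add h1 h2
end

section
/- (Remaining utility is non-increasing under ordered extension) Let X be a nonempty itemset, let X' be an ordered extension of X (X ⊊ X' and every item of X' \ X is strictly greater, in the fixed linear order on items, than every item of X), and let T be a transaction with X' ⊆ T. Then rutil(X',T) ≤ rutil(X,T). -/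
open Finset

/-- Remaining utility is non-increasing under ordered extension: if `X'` is an ordered
extension of a nonempty itemset `X` and `T` is a transaction of the database with
`X' ⊆ T`, then `rutil(X',T) ≤ rutil(X,T)`. -/
theorem rutil_nonincreasing {ι τ : Type*} [Fintype ι] [LinearOrder ι]
    (D : Finset τ) (q : ι → τ → ℕ) (v : ι → ℕ) (X X' : Finset ι) (T : τ)
    (hX : X.Nonempty) (hss : X ⊂ X')
    (hord : ∀ y ∈ X' \ X, ∀ x ∈ X, x < y)
    (hT : T ∈ D) (hXT : ∀ x ∈ X', 1 ≤ q x T) :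
    rutilT q v X' T ≤ rutilT q v X T := by
  apply Finset.sum_le_sum_of_subset
  intro x hx
  simp only [Finset.mem_filter, Finset.mem_univ, true_and] at hx ⊢
  exact ⟨hx.1, fun y hy => hx.2 y (hss.subset hy)⟩
end

section
/- (Lemma 1: FU-list pruning) Let X be a nonempty itemset and min_util a utility threshold. If S(X) · (∑_{x ∈ X} v(x)) + rutil(X) < min_util, then every ordered extension X' of X (X ⊊ X' with every item of X' \ X strictly greater, in the fixed linear order on items, than every item of X) satisfies U(X') < min_util, i.e. X' is not a high-utility itemset. -/
open Finset

/-- The support (frequency) of an itemset `X`: the sum, over all transactions `T` in `D`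
containing `X`, of `min_{x ∈ X} q x T`. -/
noncomputable def support {ι τ : Type*} (D : Finset τ) (q : ι → τ → ℕ)
    (X : Finset ι) : ℕ :=
  ∑ T ∈ D.filter (fun T => ∀ x ∈ X, 1 ≤ q x T), sInf ((fun x => q x T) '' ↑X)

/-- Lemma 1 (FU-list pruning): if `S(X) * (∑ x ∈ X, v x) + rutil(X) < min_util`, then no
ordered extension `X'` of the nonempty itemset `X` is a high-utility itemset. -/
theorem fu_list_pruning {ι τ : Type*} [Fintype ι] [LinearOrder ι]
    (D : Finset τ) (q : ι → τ → ℕ) (v : ι → ℕ) (X : Finset ι)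
    (hX : X.Nonempty) (min_util : ℕ)
    (h : support D q X * (∑ x ∈ X, v x) + rutil D q v X < min_util) :
    ∀ X' : Finset ι, X ⊂ X' → (∀ y ∈ X' \ X, ∀ x ∈ X, x < y) →
      util D q v X' < min_util := by
  intro X' hsub hord
  have hXX' : X ⊆ X' := hsub.subset
  refine lt_of_le_of_lt ?_ h
  unfold util support rutil
  rw [Finset.sum_mul]
  refine le_trans (Finset.sum_le_sum
      (g := fun T => sInf ((fun x => q x T) '' ↑X) * ∑ x ∈ X, v x + rutilT q v X T) ?_) ?_
  · intro T hT
    simp only [Finset.mem_filter] at hT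
    have hall := hT.2
    set m := sInf ((fun x => q x T) '' ↑X') with hm
    have hmle : ∀ x ∈ X', m ≤ q x T := by
      intro x hx
      exact Nat.sInf_le ⟨x, by simpa using hx, rfl⟩
    have hmX : m ≤ sInf ((fun x => q x T) '' ↑X) := by
      obtain ⟨x0, hx0⟩ := hX
      have hne : ((fun x => q x T) '' ↑X).Nonempty := ⟨q x0 T, x0, by simpa using hx0, rfl⟩
      obtain ⟨x1, hx1, hx1e⟩ := Nat.sInf_mem hne
      rw [← hx1e]
      exact hmle x1 (hXX' (by simpa using hx1))
    have hsplit : ∑ x ∈ X', v x = ∑ x ∈ X' \ X, v x + ∑ x ∈ X, v x :=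
      (Finset.sum_sdiff hXX').symm
    rw [hsplit, Nat.mul_add]
    rw [Nat.add_comm (m * ∑ x ∈ X' \ X, v x)]
    apply Nat.add_le_add
    · exact Nat.mul_le_mul_right _ hmX
    · rw [Finset.mul_sum]
      calc ∑ x ∈ X' \ X, m * v x ≤ ∑ x ∈ X' \ X, q x T * v x := by
            apply Finset.sum_le_sum
            intro x hx
            exact Nat.mul_le_mul_right _ (hmle x (Finset.mem_sdiff.mp hx).1)
        _ ≤ rutilT q v X T := by
            unfold rutilT
            apply Finset.sum_le_sum_of_subset
            intro x hx
            have hx' := Finset.mem_sdiff.mp hx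
            simp only [Finset.mem_filter, Finset.mem_univ, true_and]
            exact ⟨hall x hx'.1, fun y hy => hord x hx y hy⟩
  · refine le_trans (le_of_eq Finset.sum_add_distrib)
      (Nat.add_le_add (Finset.sum_le_sum_of_subset ?_) (Finset.sum_le_sum_of_subset ?_)) <;>
    · intro T hT
      simp only [Finset.mem_filter] at hT ⊢
      exact ⟨hT.1, fun x hx => hT.2 x (hXX' hx)⟩
end

section
/- (Correctness of pruning Strategy 1) Let X be a nonempty itemset, min_util a utility threshold and min_fre a frequency threshold. If TWU(X) < min_util and S(X) < min_fre, then every itemset X' with X ⊆ X' satisfies U(X') < min_util and S(X') < min_fre; that is, X and all of its supersets are low-frequency low-utility itemsets (LFLUI). -/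
open Finset

/-- Correctness of pruning Strategy 1: if `TWU(X) < min_util` and `S(X) < min_fre`, then
every superset `X'` of `X` satisfies `U(X') < min_util` and `S(X') < min_fre`, i.e. `X`
and all its supersets are low-frequency low-utility itemsets. -/
theorem strategy1_correct {ι τ : Type*} [Fintype ι] (D : Finset τ)
    (q : ι → τ → ℕ) (v : ι → ℕ) (X : Finset ι) (hX : X.Nonempty)
    (min_util min_fre : ℕ)
    (hU : TWU D q v X < min_util) (hS : support D q X < min_fre) :
    ∀ X' : Finset ι, X ⊆ X' →
      util D q v X' < min_util ∧ support D q X' < min_fre := by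
  intro X' hsub
  have hX' : X'.Nonempty := hX.mono hsub
  have hfil : D.filter (fun T => ∀ x ∈ X', 1 ≤ q x T) ⊆
      D.filter (fun T => ∀ x ∈ X, 1 ≤ q x T) := by
    intro T hT
    simp only [mem_filter] at hT ⊢
    exact ⟨hT.1, fun x hx => hT.2 x (hsub hx)⟩
  have hinf_le : ∀ T, ∀ x ∈ X', sInf ((fun x => q x T) '' ↑X') ≤ q x T := by
    intro T x hx
    exact Nat.sInf_le ⟨x, hx, rfl⟩
  constructor
  · refine lt_of_le_of_lt ?_ hU
    unfold util TWU
    refine le_trans (Finset.sum_le_sum_of_subset ?_) (Finset.sum_le_sum ?_)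
    · exact hfil
    · intro T hT
      calc sInf ((fun x => q x T) '' ↑X') * ∑ x ∈ X', v x
          = ∑ x ∈ X', sInf ((fun x => q x T) '' ↑X') * v x := by
            rw [Finset.mul_sum]
        _ ≤ ∑ x ∈ X', q x T * v x := by
            exact Finset.sum_le_sum fun x hx =>
              Nat.mul_le_mul_right _ (hinf_le T x hx)
        _ ≤ ∑ x, q x T * v x := Finset.sum_le_sum_of_subset (Finset.subset_univ _)
  · refine lt_of_le_of_lt ?_ hS
    unfold support
    refine le_trans (Finset.sum_le_sum_of_subset hfil) (Finset.sum_le_sum ?_)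
    intro T hT
    obtain ⟨x, hx, hval⟩ : sInf ((fun x => q x T) '' ↑X) ∈ (fun x => q x T) '' ↑X :=
      Nat.sInf_mem (hX.to_set.image _)
    rw [← hval]
    exact hinf_le T x (hsub hx)
end

section
/- (Completeness of Phase I of UFC_gen) Let min_util be a utility threshold and min_fre a frequency threshold. If a nonempty itemset X' satisfies U(X') ≥ min_util or S(X') ≥ min_fre (i.e. X' is an HFHUI, HFLUI, or LFHUI), then every nonempty itemset X with X ⊆ X' satisfies TWU(X) ≥ min_util or S(X) ≥ min_fre; in other words, every subset of X' survives the Phase I candidate test. -/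
open Finset

/-- Completeness of Phase I of UFC_gen: if a nonempty itemset `X'` satisfies
`U(X') ≥ min_util` or `S(X') ≥ min_fre`, then every nonempty subset `X` of `X'` satisfies
`TWU(X) ≥ min_util` or `S(X) ≥ min_fre`, i.e. survives the Phase I candidate test. -/
theorem phase1_completeness {ι τ : Type*} [Fintype ι] (D : Finset τ)
    (q : ι → τ → ℕ) (v : ι → ℕ) (min_util min_fre : ℕ) (X' : Finset ι)
    (hX' : X'.Nonempty)
    (h : min_util ≤ util D q v X' ∨ min_fre ≤ support D q X') :
    ∀ X : Finset ι, X.Nonempty → X ⊆ X' →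
      min_util ≤ TWU D q v X ∨ min_fre ≤ support D q X := by
  intro X hX hXX'
  have hfilt : D.filter (fun T => ∀ x ∈ X', 1 ≤ q x T) ⊆
      D.filter (fun T => ∀ x ∈ X, 1 ≤ q x T) := by
    intro T hT
    simp only [mem_filter] at hT ⊢
    exact ⟨hT.1, fun x hx => hT.2 x (hXX' hx)⟩
  have hinf : ∀ T, sInf ((fun x => q x T) '' ↑X') ≤ sInf ((fun x => q x T) '' ↑X) := by
    intro T
    obtain ⟨x, hx⟩ := hX
    have hne : ((fun x => q x T) '' ↑X).Nonempty := ⟨q x T, x, hx, rfl⟩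
    obtain ⟨y, hy, hym⟩ := Nat.sInf_mem hne
    rw [← hym]
    exact Nat.sInf_le ⟨y, hXX' hy, rfl⟩
  rcases h with h | h
  · left
    refine h.trans ?_
    unfold util TWU
    calc ∑ T ∈ D.filter (fun T => ∀ x ∈ X', 1 ≤ q x T),
          sInf ((fun x => q x T) '' ↑X') * ∑ x ∈ X', v x
        ≤ ∑ T ∈ D.filter (fun T => ∀ x ∈ X', 1 ≤ q x T), ∑ x, q x T * v x := by
          refine Finset.sum_le_sum fun T hT => ?_
          rw [Finset.mul_sum]
          calc ∑ x ∈ X', sInf ((fun x => q x T) '' ↑X') * v x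
              ≤ ∑ x ∈ X', q x T * v x := by
                refine Finset.sum_le_sum fun x hx => ?_
                exact Nat.mul_le_mul_right _ (Nat.sInf_le ⟨x, hx, rfl⟩)
            _ ≤ ∑ x, q x T * v x :=
                Finset.sum_le_sum_of_subset (Finset.subset_univ _)
      _ ≤ ∑ T ∈ D.filter (fun T => ∀ x ∈ X, 1 ≤ q x T), ∑ x, q x T * v x :=
          Finset.sum_le_sum_of_subset hfilt
  · right
    refine h.trans ?_
    unfold support
    calc ∑ T ∈ D.filter (fun T => ∀ x ∈ X', 1 ≤ q x T), sInf ((fun x => q x T) '' ↑X')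
        ≤ ∑ T ∈ D.filter (fun T => ∀ x ∈ X', 1 ≤ q x T), sInf ((fun x => q x T) '' ↑X) :=
          Finset.sum_le_sum fun T _ => hinf T
      _ ≤ ∑ T ∈ D.filter (fun T => ∀ x ∈ X, 1 ≤ q x T), sInf ((fun x => q x T) '' ↑X) :=
          Finset.sum_le_sum_of_subset hfilt
end
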